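/- Let α be an algebraic number with minimal polynomial m over ℚ, and let k ≥ 2 be an integer such that the polynomial m(x^k) is irreducible in ℚ[x]. Let β be any root of m(x^k). Then, as extended natural numbers (elements of ℕ ∪ {∞}), the number of atoms of M_β equals k times the number of atoms of M_α, and the number of strong atoms of M_β equals k times the number of strong atoms of M_α. -/

import Mathlib

open Polynomial

/-- `M_α`: the additive submonoid of `ℂ` generated by the nonnegative powers of `α`. -/
def Malpha (α : ℂ) : AddSubmonoid ℂ :=
  AddSubmonoid.closure (Set.range fun n : ℕ => α ^ n)

/-- The set of atoms of `M_α`: nonzero elements of `M_α` that cannot be written as a sum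
of two nonzero elements of `M_α`. -/
def atomsM (α : ℂ) : Set ℂ :=
  {a | a ∈ Malpha α ∧ a ≠ 0 ∧
    ∀ u v : ℂ, u ∈ Malpha α → v ∈ Malpha α → a = u + v → u = 0 ∨ v = 0}

/-- `M_α` is atomic: every nonzero element is a finite sum of atoms. -/
def IsAtomicMalpha (α : ℂ) : Prop :=
  ∀ x ∈ Malpha α, x ≠ 0 →
    ∃ s : Multiset ℂ, (∀ a ∈ s, a ∈ atomsM α) ∧ s.sum = x

/-- The set of strong atoms of `M_α`: atoms `a` such that for every `n ≥ 1` the only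
multiset of atoms summing to `n • a` is the one consisting of `n` copies of `a`. -/
def strongAtomsM (α : ℂ) : Set ℂ :=
  {a | a ∈ atomsM α ∧ ∀ n : ℕ, 0 < n →
    ∀ s : Multiset ℂ, (∀ b ∈ s, b ∈ atomsM α) → s.sum = n • a →
      s = Multiset.replicate n a}


namespace StmtAux



noncomputable def ev (δ : ℂ) (p : Polynomial ℕ) : ℂ :=
  p.eval₂ (Nat.castRingHom ℂ) δ

lemma ev_add (δ : ℂ) (p q : Polynomial ℕ) : ev δ (p + q) = ev δ p + ev δ q :=
  eval₂_add _ _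

lemma ev_zero (δ : ℂ) : ev δ 0 = 0 := eval₂_zero _ _

lemma mem_Malpha_iff {δ x : ℂ} : x ∈ Malpha δ ↔ ∃ p : Polynomial ℕ, ev δ p = x := by
  constructor
  · intro hx
    refine AddSubmonoid.closure_induction ?_ ?_ ?_ hx
    · rintro x ⟨n, rfl⟩; exact ⟨X ^ n, by simp [ev]⟩
    · exact ⟨0, ev_zero δ⟩
    · rintro x y - - ⟨p, rfl⟩ ⟨q, rfl⟩; exact ⟨p + q, ev_add δ p q⟩
  · rintro ⟨p, rfl⟩
    rw [ev, eval₂_eq_sum, Polynomial.sum]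
    apply AddSubmonoid.sum_mem
    intro n _
    have h : (Nat.castRingHom ℂ) (p.coeff n) * δ ^ n = p.coeff n • δ ^ n := by
      simp [nsmul_eq_mul]
    rw [h]
    exact nsmul_mem (AddSubmonoid.subset_closure (Set.mem_range_self n)) _

lemma ev_eq_aeval (δ : ℂ) (p : Polynomial ℕ) :
    ev δ p = aeval δ (p.map (Nat.castRingHom ℚ)) := by
  rw [aeval_def, eval₂_map]
  congr 1

lemma ev_congr {γ δ : ℂ} (hγ : IsIntegral ℚ γ)
    (h : minpoly ℚ γ = minpoly ℚ δ) {p q : Polynomial ℕ}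
    (hpq : ev γ p = ev γ q) : ev δ p = ev δ q := by
  have h0 : aeval γ ((p.map (Nat.castRingHom ℚ)) - (q.map (Nat.castRingHom ℚ))) = 0 := by
    rw [map_sub, ← ev_eq_aeval, ← ev_eq_aeval, hpq, sub_self]
  have hdvd := minpoly.dvd ℚ γ h0
  rw [h] at hdvd
  obtain ⟨c, hc⟩ := hdvd
  have h1 : aeval δ ((p.map (Nat.castRingHom ℚ)) - (q.map (Nat.castRingHom ℚ))) = 0 := by
    rw [hc, map_mul, minpoly.aeval, zero_mul]
  rw [map_sub, sub_eq_zero] at h1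
  rw [ev_eq_aeval, ev_eq_aeval, h1]


noncomputable def tr (γ δ : ℂ) (x : ℂ) : ℂ := ev δ (Function.invFun (ev γ) x)

section Tr

variable {γ δ : ℂ}

lemma tr_ev (H1 : ∀ p q, ev γ p = ev γ q → ev δ p = ev δ q) (p : Polynomial ℕ) :
    tr γ δ (ev γ p) = ev δ p := by
  apply H1
  exact Function.invFun_eq ⟨p, rfl⟩

lemma tr_spec (H1 : ∀ p q, ev γ p = ev γ q → ev δ p = ev δ q) {x : ℂ} {p : Polynomial ℕ}
    (hp : ev γ p = x) : tr γ δ x = ev δ p := hp ▸ tr_ev H1 p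

lemma tr_mem (H1 : ∀ p q, ev γ p = ev γ q → ev δ p = ev δ q) {x : ℂ}
    (hx : x ∈ Malpha γ) : tr γ δ x ∈ Malpha δ := by
  obtain ⟨p, hp⟩ := mem_Malpha_iff.mp hx
  rw [tr_spec H1 hp]
  exact mem_Malpha_iff.mpr ⟨p, rfl⟩

lemma tr_zero (H1 : ∀ p q, ev γ p = ev γ q → ev δ p = ev δ q) : tr γ δ 0 = 0 := by
  rw [tr_spec H1 (ev_zero γ), ev_zero]

lemma tr_add (H1 : ∀ p q, ev γ p = ev γ q → ev δ p = ev δ q) {x y : ℂ}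
    (hx : x ∈ Malpha γ) (hy : y ∈ Malpha γ) :
    tr γ δ (x + y) = tr γ δ x + tr γ δ y := by
  obtain ⟨p, hp⟩ := mem_Malpha_iff.mp hx
  obtain ⟨q, hq⟩ := mem_Malpha_iff.mp hy
  have hpq : ev γ (p + q) = x + y := by rw [ev_add, hp, hq]
  rw [tr_spec H1 hpq, tr_spec H1 hp, tr_spec H1 hq, ev_add]

lemma tr_inj (H1 : ∀ p q, ev γ p = ev γ q → ev δ p = ev δ q)
    (H2 : ∀ p q, ev δ p = ev δ q → ev γ p = ev γ q) {x y : ℂ}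
    (hx : x ∈ Malpha γ) (hy : y ∈ Malpha γ) (h : tr γ δ x = tr γ δ y) : x = y := by
  obtain ⟨p, hp⟩ := mem_Malpha_iff.mp hx
  obtain ⟨q, hq⟩ := mem_Malpha_iff.mp hy
  rw [tr_spec H1 hp, tr_spec H1 hq] at h
  rw [← hp, ← hq]
  exact H2 _ _ h

lemma tr_surj (H1 : ∀ p q, ev γ p = ev γ q → ev δ p = ev δ q) {y : ℂ}
    (hy : y ∈ Malpha δ) : ∃ x ∈ Malpha γ, tr γ δ x = y := by
  obtain ⟨p, hp⟩ := mem_Malpha_iff.mp hy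
  exact ⟨ev γ p, mem_Malpha_iff.mpr ⟨p, rfl⟩, by rw [tr_ev H1 p, hp]⟩

lemma tr_tr (H1 : ∀ p q, ev γ p = ev γ q → ev δ p = ev δ q)
    (H2 : ∀ p q, ev δ p = ev δ q → ev γ p = ev γ q) {x : ℂ}
    (hx : x ∈ Malpha γ) : tr δ γ (tr γ δ x) = x := by
  obtain ⟨p, hp⟩ := mem_Malpha_iff.mp hx
  rw [tr_spec H1 hp, tr_ev H2 p, hp]

lemma tr_atom (H1 : ∀ p q, ev γ p = ev γ q → ev δ p = ev δ q)
    (H2 : ∀ p q, ev δ p = ev δ q → ev γ p = ev γ q) {a : ℂ}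
    (ha : a ∈ atomsM γ) : tr γ δ a ∈ atomsM δ := by
  obtain ⟨haM, ha0, hA⟩ := ha
  refine ⟨tr_mem H1 haM, ?_, ?_⟩
  · intro h
    exact ha0 (tr_inj H1 H2 haM (zero_mem _) (h.trans (tr_zero H1).symm))
  · intro u v hu hv huv
    obtain ⟨x, hx, rfl⟩ := tr_surj H1 hu
    obtain ⟨y, hy, rfl⟩ := tr_surj H1 hv
    have hsum : a = x + y :=
      tr_inj H1 H2 haM (add_mem hx hy) (by rw [tr_add H1 hx hy]; exact huv)
    rcases hA x y hx hy hsum with h | h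
    · left; rw [h, tr_zero H1]
    · right; rw [h, tr_zero H1]

lemma tr_sum (H1 : ∀ p q, ev γ p = ev γ q → ev δ p = ev δ q) {s : Multiset ℂ}
    (hs : ∀ x ∈ s, x ∈ Malpha γ) : tr γ δ s.sum = (s.map (tr γ δ)).sum := by
  induction s using Multiset.induction with
  | empty => simp [tr_zero H1]
  | cons a s ih =>
    have haM := hs a (Multiset.mem_cons_self a s)
    have hsM : ∀ x ∈ s, x ∈ Malpha γ := fun x hx => hs x (Multiset.mem_cons_of_mem hx)
    have hsumM : s.sum ∈ Malpha γ :=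
      AddSubmonoid.multiset_sum_mem _ _ hsM
    rw [Multiset.sum_cons, tr_add H1 haM hsumM, Multiset.map_cons, Multiset.sum_cons, ih hsM]

lemma tr_nsmul (H1 : ∀ p q, ev γ p = ev γ q → ev δ p = ev δ q) {x : ℂ}
    (hx : x ∈ Malpha γ) (n : ℕ) : tr γ δ (n • x) = n • tr γ δ x := by
  have h := tr_sum H1 (s := Multiset.replicate n x)
    (fun y hy => by rw [Multiset.eq_of_mem_replicate hy]; exact hx)
  rwa [Multiset.sum_replicate, Multiset.map_replicate, Multiset.sum_replicate] at h

lemma tr_strong (H1 : ∀ p q, ev γ p = ev γ q → ev δ p = ev δ q)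
    (H2 : ∀ p q, ev δ p = ev δ q → ev γ p = ev γ q) {a : ℂ}
    (ha : a ∈ strongAtomsM γ) : tr γ δ a ∈ strongAtomsM δ := by
  obtain ⟨haA, hstr⟩ := ha
  refine ⟨tr_atom H1 H2 haA, ?_⟩
  intro n hn s hs hsum
  have hsmem : ∀ b ∈ s, b ∈ Malpha δ := fun b hb => (hs b hb).1
  have ht : ∀ b ∈ s.map (tr δ γ), b ∈ atomsM γ := by
    intro b hb
    obtain ⟨c, hc, rfl⟩ := Multiset.mem_map.mp hb
    exact tr_atom H2 H1 (hs c hc)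
  have htsum : (s.map (tr δ γ)).sum = n • a := by
    have h1 := tr_sum H2 hsmem
    rw [hsum, tr_nsmul H2 (tr_mem H1 haA.1) n, tr_tr H1 H2 haA.1] at h1
    exact h1.symm
  have hrep := hstr n hn _ ht htsum
  have hss : (s.map (tr δ γ)).map (tr γ δ) = s := by
    rw [Multiset.map_map]
    calc s.map (tr γ δ ∘ tr δ γ) = s.map id :=
          Multiset.map_congr rfl (fun b hb => tr_tr H2 H1 (hsmem b hb))
    _ = s := Multiset.map_id s
  rw [← hss, hrep, Multiset.map_replicate]

lemma encard_atoms_eq (H1 : ∀ p q, ev γ p = ev γ q → ev δ p = ev δ q)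
    (H2 : ∀ p q, ev δ p = ev δ q → ev γ p = ev γ q) :
    (atomsM δ).encard = (atomsM γ).encard := by
  have himg : tr γ δ '' atomsM γ = atomsM δ := by
    apply Set.Subset.antisymm
    · rintro _ ⟨a, ha, rfl⟩; exact tr_atom H1 H2 ha
    · intro b hb
      exact ⟨tr δ γ b, tr_atom H2 H1 hb, tr_tr H2 H1 hb.1⟩
  rw [← himg]
  exact Set.InjOn.encard_image (fun x hx y hy h => tr_inj H1 H2 hx.1 hy.1 h)

lemma encard_strong_eq (H1 : ∀ p q, ev γ p = ev γ q → ev δ p = ev δ q)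
    (H2 : ∀ p q, ev δ p = ev δ q → ev γ p = ev γ q) :
    (strongAtomsM δ).encard = (strongAtomsM γ).encard := by
  have himg : tr γ δ '' strongAtomsM γ = strongAtomsM δ := by
    apply Set.Subset.antisymm
    · rintro _ ⟨a, ha, rfl⟩; exact tr_strong H1 H2 ha
    · intro b hb
      exact ⟨tr δ γ b, tr_strong H2 H1 hb, tr_tr H2 H1 hb.1.1⟩
  rw [← himg]
  exact Set.InjOn.encard_image (fun x hx y hy h => tr_inj H1 H2 hx.1.1 hy.1.1 h)

end Tr

structure Setup (β γ : ℂ) (k : ℕ) : Prop where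
  hk0 : 0 < k
  hβ0 : β ≠ 0
  hE : ∀ x ∈ Malpha β, ∃ y : Fin k → ℂ,
        (∀ i, y i ∈ Malpha γ) ∧ x = ∑ i : Fin k, β ^ (i : ℕ) * y i
  hU : ∀ y z : Fin k → ℂ, (∀ i, y i ∈ Malpha γ) → (∀ i, z i ∈ Malpha γ) →
        (∑ i : Fin k, β ^ (i : ℕ) * y i) = (∑ i : Fin k, β ^ (i : ℕ) * z i) → y = z
  hMul : ∀ (r : ℕ), ∀ x ∈ Malpha γ, β ^ r * x ∈ Malpha β

def NoU (γ : ℂ) : Prop := ∀ y ∈ Malpha γ, ∀ z ∈ Malpha γ, y + z = 0 → y = 0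

lemma single (β : ℂ) {k : ℕ} (i : Fin k) (c : ℂ) :
    (∑ j : Fin k, β ^ (j : ℕ) * (if j = i then c else 0)) = β ^ (i : ℕ) * c := by
  rw [Finset.sum_eq_single i]
  · rw [if_pos rfl]
  · intro j _ hj; rw [if_neg hj, mul_zero]
  · intro h; exact absurd (Finset.mem_univ i) h

lemma msum_mul (b : ℂ) (t : Multiset ℂ) :
    (t.map (fun x => b * x)).sum = b * t.sum := by
  induction t using Multiset.induction with
  | empty => simp
  | cons a s ih => simp [Multiset.map_cons, Multiset.sum_cons, ih, mul_add]

lemma msum_finset {ι : Type*} (T : Finset ι) (f : ι → Multiset ℂ) :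
    (∑ i ∈ T, f i).sum = ∑ i ∈ T, (f i).sum := by
  classical
  induction T using Finset.induction_on with
  | empty => simp
  | @insert a T ha ih =>
      rw [Finset.sum_insert ha, Finset.sum_insert ha, Multiset.sum_add, ih]

section Struct

variable {β γ : ℂ} {k : ℕ}

lemma rep_unique (S : Setup β γ k) {i j : Fin k} {c c' : ℂ}
    (hc : c ∈ Malpha γ) (hc' : c' ∈ Malpha γ) (hc0 : c ≠ 0)
    (h : β ^ (i : ℕ) * c = β ^ (j : ℕ) * c') : i = j ∧ c = c' := by
  have hfun := S.hU (fun t => if t = i then c else 0) (fun t => if t = j then c' else 0)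
    (fun t => by split <;> first | exact hc | exact zero_mem _)
    (fun t => by split <;> first | exact hc' | exact zero_mem _)
    (by rw [single, single, h])
  have h1 := congrFun hfun i
  simp only [if_pos rfl] at h1
  by_cases hij : i = j
  · subst hij
    refine ⟨rfl, ?_⟩
    exact mul_left_cancel₀ (pow_ne_zero _ S.hβ0) h
  · rw [if_neg hij] at h1
    exact absurd h1 hc0

lemma atoms_empty {δ y : ℂ} (hy : y ∈ Malpha δ) (hy0 : y ≠ 0) (hny : -y ∈ Malpha δ) :
    atomsM δ = ∅ := by
  ext a
  simp only [Set.mem_empty_iff_false, iff_false]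
  rintro ⟨haM, ha0, hA⟩
  rcases hA (a + y) (-y) (add_mem haM hy) hny (by ring) with h | h
  · have hay : a = -y := eq_neg_of_add_eq_zero_left h
    rcases hA (a + a) (-a) (add_mem haM haM) (by rw [hay, neg_neg]; exact hy) (by ring)
      with h2 | h2
    · exact ha0 (add_self_eq_zero.mp h2)
    · exact ha0 (neg_eq_zero.mp h2)
  · exact hy0 (neg_eq_zero.mp h)

lemma exists_unit {γ : ℂ} (h : ¬ NoU γ) :
    ∃ y, y ∈ Malpha γ ∧ y ≠ 0 ∧ -y ∈ Malpha γ := by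
  unfold NoU at h
  push_neg at h
  obtain ⟨y, hy, z, hz, hyz, hy0⟩ := h
  refine ⟨y, hy, hy0, ?_⟩
  have : -y = z := by linear_combination -hyz
  rwa [this]

lemma sum_eq_zero {γ : ℂ} (hNU : NoU γ) :
    ∀ (t : Multiset ℂ), (∀ x ∈ t, x ∈ Malpha γ) → t.sum = 0 → ∀ x ∈ t, x = 0 := by
  intro t
  induction t using Multiset.induction with
  | empty => intro _ _ x hx; exact absurd hx (Multiset.notMem_zero x)
  | cons a s ih =>
    intro hmem hsum x hx
    have haM := hmem a (Multiset.mem_cons_self a s)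
    have hsM : ∀ b ∈ s, b ∈ Malpha γ := fun b hb => hmem b (Multiset.mem_cons_of_mem hb)
    have hsumM : s.sum ∈ Malpha γ := AddSubmonoid.multiset_sum_mem _ _ hsM
    rw [Multiset.sum_cons] at hsum
    have ha0 : a = 0 := hNU a haM s.sum hsumM hsum
    have hs0 : s.sum = 0 := by rwa [ha0, zero_add] at hsum
    rcases Multiset.mem_cons.mp hx with rfl | hx
    · exact ha0
    · exact ih hsM hs0 x hx


lemma atom_rep (S : Setup β γ k) {a : ℂ} (ha : a ∈ atomsM β) :
    ∃ (i : Fin k) (c : ℂ), c ∈ atomsM γ ∧ a = β ^ (i : ℕ) * c := by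
  obtain ⟨haM, ha0, hA⟩ := ha
  obtain ⟨y, hy, rfl⟩ := S.hE a haM
  have hne : ∃ i, y i ≠ 0 := by
    by_contra h
    push_neg at h
    exact ha0 (Finset.sum_eq_zero (fun i _ => by rw [h i, mul_zero]))
  obtain ⟨i₀, hi₀⟩ := hne
  have hzero : ∀ i, i ≠ i₀ → y i = 0 := by
    intro i₁ hi₁ne
    by_contra hy1
    have hsplit : (∑ i : Fin k, β ^ (i : ℕ) * y i)
        = β ^ (i₀ : ℕ) * y i₀ + ∑ i : Fin k, β ^ (i : ℕ) * (if i = i₀ then 0 else y i) := by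
      rw [← single β i₀ (y i₀), ← Finset.sum_add_distrib]
      apply Finset.sum_congr rfl
      intro i _
      rw [← mul_add]
      congr 1
      split_ifs with h
      · subst h; simp
      · simp
    have huM : β ^ (i₀ : ℕ) * y i₀ ∈ Malpha β := S.hMul _ _ (hy i₀)
    have hvM : (∑ i : Fin k, β ^ (i : ℕ) * (if i = i₀ then 0 else y i)) ∈ Malpha β :=
      AddSubmonoid.sum_mem _ (fun i _ => S.hMul _ _
        (by split_ifs; exacts [zero_mem _, hy i]))
    rcases hA _ _ huM hvM hsplit with h | h
    · exact (mul_ne_zero (pow_ne_zero _ S.hβ0) hi₀) h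
    · have hfun := S.hU (fun i => if i = i₀ then 0 else y i) (fun _ => 0)
        (fun i => by split_ifs; exacts [zero_mem _, hy i])
        (fun _ => zero_mem _)
        (by simp only [mul_zero, Finset.sum_const_zero]; exact h)
      have h1 := congrFun hfun i₁
      simp only [if_neg hi₁ne] at h1
      exact hy1 h1
  have hsum_single : (∑ i : Fin k, β ^ (i : ℕ) * y i) = β ^ (i₀ : ℕ) * y i₀ :=
    Finset.sum_eq_single i₀ (fun i _ hi => by rw [hzero i hi, mul_zero])
      (fun h => absurd (Finset.mem_univ i₀) h)
  refine ⟨i₀, y i₀, ⟨hy i₀, hi₀, ?_⟩, hsum_single⟩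
  intro u' v' hu' hv' heq
  have hdec : (∑ i : Fin k, β ^ (i : ℕ) * y i)
      = β ^ (i₀ : ℕ) * u' + β ^ (i₀ : ℕ) * v' := by
    rw [hsum_single, heq, mul_add]
  rcases hA _ _ (S.hMul _ _ hu') (S.hMul _ _ hv') hdec with h | h
  · left; exact (mul_eq_zero.mp h).resolve_left (pow_ne_zero _ S.hβ0)
  · right; exact (mul_eq_zero.mp h).resolve_left (pow_ne_zero _ S.hβ0)

lemma mem_atoms_of (S : Setup β γ k) (hNU : NoU γ) (r : Fin k) {c : ℂ}
    (hc : c ∈ atomsM γ) : β ^ (r : ℕ) * c ∈ atomsM β := by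
  obtain ⟨hcM, hc0, hcA⟩ := hc
  refine ⟨S.hMul _ _ hcM, mul_ne_zero (pow_ne_zero _ S.hβ0) hc0, ?_⟩
  intro u v hu hv huv
  obtain ⟨yu, hyu, rfl⟩ := S.hE u hu
  obtain ⟨yv, hyv, rfl⟩ := S.hE v hv
  have hcomp := S.hU (fun i => yu i + yv i) (fun i => if i = r then c else 0)
    (fun i => add_mem (hyu i) (hyv i))
    (fun i => by split_ifs; exacts [hcM, zero_mem _])
    (by rw [single, huv]; simp [mul_add, Finset.sum_add_distrib])
  have hr : c = yu r + yv r := by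
    have := congrFun hcomp r
    simpa using this.symm
  rcases hcA (yu r) (yv r) (hyu r) (hyv r) hr with h | h
  · left
    apply Finset.sum_eq_zero
    intro i _
    rcases eq_or_ne i r with rfl | hir
    · rw [h, mul_zero]
    · have hz : yu i + yv i = 0 := by
        have := congrFun hcomp i
        simpa [hir] using this
      rw [hNU _ (hyu i) _ (hyv i) hz, mul_zero]
  · right
    apply Finset.sum_eq_zero
    intro i _
    rcases eq_or_ne i r with rfl | hir
    · rw [h, mul_zero]
    · have hz : yu i + yv i = 0 := by
        have := congrFun hcomp i
        simpa [hir] using this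
      have hz' : yv i + yu i = 0 := by rw [add_comm]; exact hz
      rw [hNU _ (hyv i) _ (hyu i) hz', mul_zero]

lemma Malpha_le (S : Setup β γ k) {x : ℂ} (hx : x ∈ Malpha γ) : x ∈ Malpha β := by
  have := S.hMul 0 x hx
  rwa [pow_zero, one_mul] at this

lemma atoms_eq (S : Setup β γ k) :
    atomsM β = ⋃ r ∈ Finset.range k, (fun x => β ^ r * x) '' atomsM γ := by
  by_cases hNU : NoU γ
  · ext a
    simp only [Set.mem_iUnion, Set.mem_image, Finset.mem_range, exists_prop]
    constructor
    · intro ha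
      obtain ⟨i, c, hc, rfl⟩ := atom_rep S ha
      exact ⟨(i : ℕ), i.isLt, c, hc, rfl⟩
    · rintro ⟨r, hr, c, hc, rfl⟩
      exact mem_atoms_of S hNU ⟨r, hr⟩ hc
  · obtain ⟨y, hyM, hy0, hnyM⟩ := exists_unit hNU
    have h1 : atomsM γ = ∅ := atoms_empty hyM hy0 hnyM
    have h2 : atomsM β = ∅ := atoms_empty (Malpha_le S hyM) hy0 (Malpha_le S hnyM)
    rw [h1, h2]
    simp

lemma sum_decomp (S : Setup β γ k) :
    ∀ (s : Multiset ℂ), (∀ b ∈ s, b ∈ atomsM β) →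
      ∃ t : Fin k → Multiset ℂ, (∀ i, ∀ x ∈ t i, x ∈ atomsM γ) ∧
        s = ∑ i : Fin k, (t i).map (fun x => β ^ (i : ℕ) * x) := by
  intro s
  induction s using Multiset.induction with
  | empty => exact fun _ => ⟨fun _ => 0, by simp, by simp⟩
  | cons a s ih =>
    intro h
    obtain ⟨t, ht, hts⟩ := ih (fun b hb => h b (Multiset.mem_cons_of_mem hb))
    obtain ⟨i, c, hc, hac⟩ := atom_rep S (h a (Multiset.mem_cons_self a s))
    refine ⟨Function.update t i (c ::ₘ t i), ?_, ?_⟩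
    · intro j x hx
      rcases eq_or_ne j i with rfl | hj
      · rw [Function.update_self] at hx
        rcases Multiset.mem_cons.mp hx with rfl | hx
        · exact hc
        · exact ht _ _ hx
      · rw [Function.update_of_ne hj] at hx
        exact ht _ _ hx
    · have hterm : ∀ j : Fin k, (Function.update t i (c ::ₘ t i) j).map
          (fun x => β ^ (j : ℕ) * x)
          = (t j).map (fun x => β ^ (j : ℕ) * x)
            + (if j = i then ({β ^ (i : ℕ) * c} : Multiset ℂ) else 0) := by
        intro j
        rcases eq_or_ne j i with rfl | hj
        · rw [Function.update_self, if_pos rfl, Multiset.map_cons, add_comm,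
            Multiset.singleton_add]
        · rw [Function.update_of_ne hj, if_neg hj, add_zero]
      rw [Finset.sum_congr rfl (fun j _ => hterm j), Finset.sum_add_distrib, ← hts,
        Finset.sum_ite_eq' Finset.univ i (fun _ => ({β ^ (i : ℕ) * c} : Multiset ℂ))]
      rw [if_pos (Finset.mem_univ i), ← hac, add_comm, Multiset.singleton_add]

lemma mem_strong_of (S : Setup β γ k) (hNU : NoU γ) (r : Fin k) {c : ℂ}
    (hc : c ∈ strongAtomsM γ) : β ^ (r : ℕ) * c ∈ strongAtomsM β := by
  obtain ⟨hcA, hstr⟩ := hc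
  refine ⟨mem_atoms_of S hNU r hcA, ?_⟩
  intro n hn s hs hssum
  obtain ⟨t, ht, hts⟩ := sum_decomp S s hs
  have hsum2 : s.sum = ∑ i : Fin k, β ^ (i : ℕ) * (t i).sum := by
    rw [hts, msum_finset]
    exact Finset.sum_congr rfl (fun i _ => msum_mul _ _)
  have hw := S.hU (fun i => (t i).sum) (fun i => if i = r then n • c else 0)
    (fun i => AddSubmonoid.multiset_sum_mem _ _ (fun x hx => (ht i x hx).1))
    (fun i => by split_ifs
                 · exact nsmul_mem hcA.1 n
                 · exact zero_mem _)
    (by rw [← hsum2, hssum, single]; exact (mul_smul_comm _ _ _).symm)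
  have htEmpty : ∀ i, i ≠ r → t i = 0 := by
    intro i hir
    have h0 : (t i).sum = 0 := by
      have := congrFun hw i
      simpa [hir] using this
    apply Multiset.eq_zero_of_forall_notMem
    intro x hx
    exact (ht i x hx).2.1 (sum_eq_zero hNU (t i) (fun b hb => (ht i b hb).1) h0 x hx)
  have htr : t r = Multiset.replicate n c := by
    apply hstr n hn _ (fun b hb => ht r b hb)
    have := congrFun hw r
    simpa using this
  rw [hts, Finset.sum_eq_single r
    (fun i _ hir => by rw [htEmpty i hir]; rfl)
    (fun h => absurd (Finset.mem_univ r) h), htr, Multiset.map_replicate]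

lemma strong_rep (S : Setup β γ k) (hNU : NoU γ) {a : ℂ} (ha : a ∈ strongAtomsM β) :
    ∃ (i : Fin k) (c : ℂ), c ∈ strongAtomsM γ ∧ a = β ^ (i : ℕ) * c := by
  obtain ⟨haA, hstr⟩ := ha
  obtain ⟨i, c, hc, rfl⟩ := atom_rep S haA
  refine ⟨i, c, ⟨hc, ?_⟩, rfl⟩
  intro n hn t ht htsum
  have hmap : ∀ b ∈ t.map (fun x => β ^ (i : ℕ) * x), b ∈ atomsM β := by
    rintro b hb
    obtain ⟨x, hx, rfl⟩ := Multiset.mem_map.mp hb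
    exact mem_atoms_of S hNU i (ht x hx)
  have hsum : (t.map (fun x => β ^ (i : ℕ) * x)).sum = n • (β ^ (i : ℕ) * c) := by
    rw [msum_mul, htsum]
    exact mul_smul_comm _ _ _
  have hrep := hstr n hn _ hmap hsum
  have hinj : Function.Injective (fun x : ℂ => β ^ (i : ℕ) * x) :=
    mul_right_injective₀ (pow_ne_zero _ S.hβ0)
  apply Multiset.map_injective hinj
  rw [hrep, Multiset.map_replicate]

lemma strong_eq (S : Setup β γ k) :
    strongAtomsM β = ⋃ r ∈ Finset.range k, (fun x => β ^ r * x) '' strongAtomsM γ := by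
  by_cases hNU : NoU γ
  · ext a
    simp only [Set.mem_iUnion, Set.mem_image, Finset.mem_range, exists_prop]
    constructor
    · intro ha
      obtain ⟨i, c, hc, rfl⟩ := strong_rep S hNU ha
      exact ⟨(i : ℕ), i.isLt, c, hc, rfl⟩
    · rintro ⟨r, hr, c, hc, rfl⟩
      exact mem_strong_of S hNU ⟨r, hr⟩ hc
  · obtain ⟨y, hyM, hy0, hnyM⟩ := exists_unit hNU
    have h1 : atomsM γ = ∅ := atoms_empty hyM hy0 hnyM
    have h2 : atomsM β = ∅ := atoms_empty (Malpha_le S hyM) hy0 (Malpha_le S hnyM)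
    have h1' : strongAtomsM γ = ∅ :=
      Set.eq_empty_of_subset_empty (fun x hx => h1 ▸ hx.1)
    have h2' : strongAtomsM β = ∅ :=
      Set.eq_empty_of_subset_empty (fun x hx => h2 ▸ hx.1)
    rw [h1', h2']
    simp

lemma encard_biUnion_mul {β : ℂ} (S : Set ℂ) (T : Finset ℕ) (hβ0 : β ≠ 0)
    (hdisj : ∀ i ∈ T, ∀ j ∈ T, i ≠ j → ∀ x ∈ S, ∀ y ∈ S, β ^ i * x ≠ β ^ j * y) :
    (⋃ i ∈ T, (fun x => β ^ i * x) '' S).encard = T.card * S.encard := by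
  classical
  induction T using Finset.induction_on with
  | empty => simp
  | @insert a T haT ih =>
    rw [Finset.set_biUnion_insert]
    have hdisjset : Disjoint ((fun x => β ^ a * x) '' S)
        (⋃ i ∈ T, (fun x => β ^ i * x) '' S) := by
      rw [Set.disjoint_left]
      rintro _ ⟨u, hu, rfl⟩ hx2
      simp only [Set.mem_iUnion, Set.mem_image, exists_prop] at hx2
      obtain ⟨j, hjT, v, hv, hEq⟩ := hx2
      exact hdisj a (Finset.mem_insert_self a T) j (Finset.mem_insert_of_mem hjT)
        (fun h => haT (h ▸ hjT)) u hu v hv hEq.symm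
    rw [Set.encard_union_eq hdisjset,
      (mul_right_injective₀ (pow_ne_zero a hβ0)).encard_image,
      ih (fun i hi j hj hij => hdisj i (Finset.mem_insert_of_mem hi) j
        (Finset.mem_insert_of_mem hj) hij),
      Finset.card_insert_of_notMem haT]
    push_cast
    ring

end Struct

end StmtAux

open StmtAux in
theorem stmt_13 (α : ℂ) (hα : IsAlgebraic ℚ α)
    (k : ℕ) (hk : 2 ≤ k)
    (hirr : Irreducible ((minpoly ℚ α).comp (X ^ k)))
    (β : ℂ) (hβ : Polynomial.aeval β ((minpoly ℚ α).comp (X ^ k)) = 0) :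
    (atomsM β).encard = (k : ℕ∞) * (atomsM α).encard ∧
    (strongAtomsM β).encard = (k : ℕ∞) * (strongAtomsM α).encard := by
  classical
  have hαint : IsIntegral ℚ α := hα.isIntegral
  set m := minpoly ℚ α with hmdef
  have hmmonic : m.Monic := minpoly.monic hαint
  have hd : 0 < m.natDegree := minpoly.natDegree_pos hαint
  have hk0 : 0 < k := by omega
  have hXk : (X ^ k : ℚ[X]).natDegree = k := natDegree_X_pow k
  have hcomp_monic : (m.comp (X ^ k)).Monic := by
    have h := leadingCoeff_comp (p := m) (q := (X ^ k : ℚ[X])) (by rw [hXk]; omega)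
    have h2 : (m.comp (X ^ k)).leadingCoeff = 1 := by
      rw [h, leadingCoeff_X_pow, one_pow, mul_one]; exact hmmonic
    exact h2
  have hβint : IsIntegral ℚ β := IsAlgebraic.isIntegral ⟨_, hcomp_monic.ne_zero, hβ⟩
  have hminβ : minpoly ℚ β = m.comp (X ^ k) :=
    (minpoly.eq_of_irreducible_of_monic hirr hβ hcomp_monic).symm
  have hγroot : aeval (β ^ k) m = 0 := by
    have h1 : aeval β (m.comp (X ^ k)) = aeval (β ^ k) m := by
      rw [aeval_comp]; simp
    rw [← h1]; exact hβ
  have hmirr : Irreducible m := minpoly.irreducible hαint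
  have hminγ : minpoly ℚ (β ^ k) = m :=
    (minpoly.eq_of_irreducible_of_monic hmirr hγroot hmmonic).symm
  have hγint : IsIntegral ℚ (β ^ k) := hβint.pow k
  have hkd : k ≤ m.natDegree * k := by
    calc k = 1 * k := (one_mul k).symm
    _ ≤ m.natDegree * k := Nat.mul_le_mul_right k hd
  have hβ0 : β ≠ 0 := by
    intro h0
    rw [h0, minpoly.zero] at hminβ
    have hdeg : (X : ℚ[X]).natDegree = m.natDegree * k := by
      rw [hminβ, natDegree_comp, hXk]
    rw [natDegree_X] at hdeg
    rw [← hdeg] at hkd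
    omega
  have hdk : (minpoly ℚ β).natDegree = m.natDegree * k := by
    rw [hminβ, natDegree_comp, hXk]
  have H1 : ∀ p q, ev (β ^ k) p = ev (β ^ k) q → ev α p = ev α q :=
    fun p q h => ev_congr hγint (by rw [hminγ]) h
  have H2 : ∀ p q, ev α p = ev α q → ev (β ^ k) p = ev (β ^ k) q :=
    fun p q h => ev_congr hαint (by rw [hminγ]) h
  have hMul : ∀ (r : ℕ), ∀ x ∈ Malpha (β ^ k), β ^ r * x ∈ Malpha β := by
    intro r x hx
    refine AddSubmonoid.closure_induction ?_ ?_ ?_ hx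
    · rintro x ⟨q, rfl⟩
      have h : β ^ r * (β ^ k) ^ q = β ^ (r + k * q) := by
        rw [← pow_mul, ← pow_add]
      rw [h]
      exact AddSubmonoid.subset_closure (Set.mem_range_self _)
    · rw [mul_zero]; exact zero_mem _
    · intro x y _ _ ihx ihy
      rw [mul_add]; exact add_mem ihx ihy
  have hE : ∀ x ∈ Malpha β, ∃ y : Fin k → ℂ,
      (∀ i, y i ∈ Malpha (β ^ k)) ∧ x = ∑ i : Fin k, β ^ (i : ℕ) * y i := by
    intro x hx
    refine AddSubmonoid.closure_induction ?_ ?_ ?_ hx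
    · rintro x ⟨n, rfl⟩
      refine ⟨fun i => if i = (⟨n % k, Nat.mod_lt n hk0⟩ : Fin k)
          then (β ^ k) ^ (n / k) else 0, fun i => ?_, ?_⟩
      · dsimp only; split_ifs
        · exact AddSubmonoid.subset_closure (Set.mem_range_self _)
        · exact zero_mem _
      · rw [single]
        rw [← pow_mul, ← pow_add]
        congr 1
        exact (Nat.mod_add_div n k).symm
    · exact ⟨0, fun i => zero_mem _, by simp⟩
    · rintro x y _ _ ⟨u, hu, rfl⟩ ⟨v, hv, rfl⟩
      refine ⟨fun i => u i + v i, fun i => add_mem (hu i) (hv i), ?_⟩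
      rw [← Finset.sum_add_distrib]
      exact Finset.sum_congr rfl (fun i _ => by rw [mul_add])
  have key : ∀ w : Fin k → ℂ, (∀ i, w i ∈ Malpha (β ^ k)) → ∃ P : Fin k → ℚ[X],
      (∀ i, (P i).natDegree < m.natDegree) ∧ (∀ i, aeval (β ^ k) (P i) = w i) := by
    intro w hw
    choose p hp using fun i => mem_Malpha_iff.mp (hw i)
    have hm1 : m ≠ 1 := by
      intro h; rw [h, natDegree_one] at hd; exact lt_irrefl 0 hd
    refine ⟨fun i => ((p i).map (Nat.castRingHom ℚ)) %ₘ m, fun i => ?_, fun i => ?_⟩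
    · exact natDegree_modByMonic_lt _ hmmonic hm1
    · show aeval (β ^ k) ((p i).map (Nat.castRingHom ℚ) %ₘ m) = w i
      rw [modByMonic_eq_sub_mul_div _ m, map_sub, map_mul, hγroot, zero_mul,
        sub_zero, ← ev_eq_aeval, hp]
  have hU : ∀ y z : Fin k → ℂ, (∀ i, y i ∈ Malpha (β ^ k)) → (∀ i, z i ∈ Malpha (β ^ k)) →
      (∑ i : Fin k, β ^ (i : ℕ) * y i) = (∑ i : Fin k, β ^ (i : ℕ) * z i) → y = z := by
    intro y z hy hz hsum
    obtain ⟨P, hPdeg, hPval⟩ := key y hy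
    obtain ⟨Q, hQdeg, hQval⟩ := key z hz
    set F : ℚ[X] := ∑ i : Fin k, X ^ (i : ℕ) * (expand ℚ k (P i - Q i)) with hF
    have hFroot : aeval β F = 0 := by
      rw [hF, map_sum]
      have hterm : ∀ i : Fin k, aeval β (X ^ (i : ℕ) * expand ℚ k (P i - Q i))
          = β ^ (i : ℕ) * (y i - z i) := by
        intro i
        rw [map_mul, map_pow, aeval_X, expand_aeval, map_sub, hPval, hQval]
      rw [Finset.sum_congr rfl (fun i _ => hterm i)]
      have hsplit : ∑ i : Fin k, β ^ (i : ℕ) * (y i - z i)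
          = (∑ i : Fin k, β ^ (i : ℕ) * y i) - ∑ i : Fin k, β ^ (i : ℕ) * z i := by
        rw [← Finset.sum_sub_distrib]
        exact Finset.sum_congr rfl (fun i _ => by ring)
      rw [hsplit, hsum, sub_self]
    have hFdeg : F.natDegree < m.natDegree * k := by
      have hlt : ∀ i : Fin k,
          (X ^ (i : ℕ) * expand ℚ k (P i - Q i)).natDegree < m.natDegree * k := by
        intro i
        have h2 : (P i - Q i).natDegree < m.natDegree :=
          lt_of_le_of_lt (natDegree_sub_le _ _) (max_lt (hPdeg i) (hQdeg i))
        calc (X ^ (i : ℕ) * expand ℚ k (P i - Q i)).natDegree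
            ≤ (i : ℕ) + (P i - Q i).natDegree * k := by
              refine natDegree_mul_le.trans ?_
              rw [natDegree_X_pow, natDegree_expand]
          _ < k + (P i - Q i).natDegree * k := Nat.add_lt_add_right i.isLt _
          _ = ((P i - Q i).natDegree + 1) * k := by ring
          _ ≤ m.natDegree * k := Nat.mul_le_mul_right k (Nat.succ_le_of_lt h2)
      have hpos : 0 < m.natDegree * k := Nat.mul_pos hd hk0
      have hbound : ∀ i ∈ (Finset.univ : Finset (Fin k)), (X ^ (i : ℕ) * expand ℚ k (P i - Q i)).natDegree
          ≤ m.natDegree * k - 1 := fun i _ => Nat.le_pred_of_lt (hlt i)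
      have hsum2 := natDegree_sum_le_of_forall_le Finset.univ _ hbound
      rw [← hF] at hsum2
      exact lt_of_le_of_lt hsum2 (Nat.pred_lt (Nat.pos_iff_ne_zero.mp hpos))
    have hF0 : F = 0 := by
      by_contra hne
      have hle := minpoly.degree_le_of_ne_zero ℚ β hne hFroot
      have hle2 := natDegree_le_natDegree hle
      rw [hdk] at hle2
      exact absurd hle2 (not_le.mpr hFdeg)
    have hPQ : ∀ i : Fin k, P i = Q i := by
      intro i
      have hcoeff : ∀ j : ℕ, (P i - Q i).coeff j = 0 := by
        intro j
        have h1 : F.coeff (k * j + (i : ℕ)) = (P i - Q i).coeff j := by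
          rw [hF, finset_sum_coeff]
          rw [Finset.sum_eq_single i]
          · rw [mul_comm (X ^ (i : ℕ)) _, coeff_mul_X_pow', if_pos (Nat.le_add_left _ _),
              Nat.add_sub_cancel, coeff_expand hk0, if_pos ⟨j, rfl⟩,
              Nat.mul_div_cancel_left j hk0]
          · intro r _ hri
            rw [mul_comm (X ^ (r : ℕ)) _, coeff_mul_X_pow']
            by_cases hle : (r : ℕ) ≤ k * j + (i : ℕ)
            · have hndvd : ¬ (k ∣ k * j + (i : ℕ) - (r : ℕ)) := by
                rintro ⟨s, hs⟩
                have hsr : k * s + (r : ℕ) = k * j + (i : ℕ) :=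
                  (((Nat.sub_eq_iff_eq_add hle).mp hs).symm ▸ rfl : k * s + (r : ℕ) = k * s + (r : ℕ)) ▸
                    ((Nat.sub_eq_iff_eq_add hle).mp hs).symm
                have hmod : (k * s + (r : ℕ)) % k = (k * j + (i : ℕ)) % k := by rw [hsr]
                rw [Nat.mul_add_mod, Nat.mul_add_mod, Nat.mod_eq_of_lt r.isLt,
                  Nat.mod_eq_of_lt i.isLt] at hmod
                exact hri (Fin.ext hmod)
              rw [if_pos hle, coeff_expand hk0, if_neg hndvd]
            · rw [if_neg hle]
          · intro h; exact absurd (Finset.mem_univ i) h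
        rw [hF0, coeff_zero] at h1
        exact h1.symm
      have hsub : P i - Q i = 0 := by
        ext j; rw [hcoeff j, coeff_zero]
      exact sub_eq_zero.mp hsub
    funext i
    rw [← hPval i, ← hQval i, hPQ i]
  have Sst : Setup β (β ^ k) k := ⟨hk0, hβ0, hE, hU, hMul⟩
  have hdisjA : ∀ i ∈ Finset.range k, ∀ j ∈ Finset.range k, i ≠ j →
      ∀ x ∈ atomsM (β ^ k), ∀ y ∈ atomsM (β ^ k), β ^ i * x ≠ β ^ j * y := by
    intro i hi j hj hij x hx y hy heq
    have h := rep_unique Sst (i := ⟨i, Finset.mem_range.mp hi⟩)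
      (j := ⟨j, Finset.mem_range.mp hj⟩) hx.1 hy.1 hx.2.1 heq
    exact hij (congrArg Fin.val h.1)
  have hdisjS : ∀ i ∈ Finset.range k, ∀ j ∈ Finset.range k, i ≠ j →
      ∀ x ∈ strongAtomsM (β ^ k), ∀ y ∈ strongAtomsM (β ^ k), β ^ i * x ≠ β ^ j * y := by
    intro i hi j hj hij x hx y hy heq
    have h := rep_unique Sst (i := ⟨i, Finset.mem_range.mp hi⟩)
      (j := ⟨j, Finset.mem_range.mp hj⟩) hx.1.1 hy.1.1 hx.1.2.1 heq
    exact hij (congrArg Fin.val h.1)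
  constructor
  · rw [atoms_eq Sst, encard_biUnion_mul _ _ hβ0 hdisjA, Finset.card_range,
      encard_atoms_eq H1 H2]
  · rw [strong_eq Sst, encard_biUnion_mul _ _ hβ0 hdisjS, Finset.card_range,
      encard_strong_eq H1 H2]
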